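/- Let z ∈ k[X] be a nonzero polynomial with d(z) = 0 and e(z) = w·z for a natural number w, and let i be an integer with 0 ≤ i ≤ min(n, w). Then the Casimir element τ_i(z) again lies in the kernel of d: d(τ_i(z)) = 0. -/
import Mathlib


open MvPolynomial Finset

/-- The Weitzenböck derivation `d` on `k[x_0,…,x_n]`: `d(x_i) = x_{i-1}` for
`1 ≤ i ≤ n` and `d(x_0) = 0`. -/
noncomputable def weitz (k : Type*) [Field k] [CharZero k] (n : ℕ) :
    Derivation k (MvPolynomial (Fin (n + 1)) k) (MvPolynomial (Fin (n + 1)) k) :=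
  mkDerivation k (fun i : Fin (n + 1) =>
    if _ : (i : ℕ) = 0 then 0
    else X (⟨(i : ℕ) - 1, by have := i.isLt; omega⟩ : Fin (n + 1)))

/-- The derivation `d̂` on `k[x_0,…,x_n]`: `d̂(x_i) = (i+1)(n−i)·x_{i+1}` for
`0 ≤ i ≤ n−1` and `d̂(x_n) = 0`. -/
noncomputable def dhat (k : Type*) [Field k] [CharZero k] (n : ℕ) :
    Derivation k (MvPolynomial (Fin (n + 1)) k) (MvPolynomial (Fin (n + 1)) k) :=
  mkDerivation k (fun i : Fin (n + 1) =>
    if h : (i : ℕ) = n then 0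
    else ((((i : ℕ) + 1) * (n - (i : ℕ)) : ℕ) : k) •
      X (⟨(i : ℕ) + 1, by have := i.isLt; omega⟩ : Fin (n + 1)))

/-- The derivation `e` on `k[x_0,…,x_n]`: `e(x_i) = (n−2i)·x_i`. -/
noncomputable def ee (k : Type*) [Field k] [CharZero k] (n : ℕ) :
    Derivation k (MvPolynomial (Fin (n + 1)) k) (MvPolynomial (Fin (n + 1)) k) :=
  mkDerivation k (fun i : Fin (n + 1) => ((n : ℤ) - 2 * (i : ℕ)) • X i)

section Helpers

variable {k : Type*} [Field k] [CharZero k] {n : ℕ}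

lemma weitz_X (m : ℕ) (h : m < n + 1) :
    weitz k n (X ⟨m, h⟩) = if _ : m = 0 then 0 else X (⟨m - 1, by omega⟩ : Fin (n+1)) := by
  simp [weitz, mkDerivation_X]

lemma dhat_X (m : ℕ) (h : m < n + 1) :
    dhat k n (X ⟨m, h⟩) = if _ : m = n then 0 else
      (((m + 1) * (n - m) : ℕ) : k) • X (⟨m + 1, by omega⟩ : Fin (n+1)) := by
  simp [dhat, mkDerivation_X]

lemma ee_X (m : ℕ) (h : m < n + 1) :
    ee k n (X ⟨m, h⟩) = (((n : k) - 2 * m)) • X (⟨m, h⟩ : Fin (n+1)) := by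
  simp only [ee, mkDerivation_X]
  rw [← Int.cast_smul_eq_zsmul k]
  push_cast
  ring_nf

lemma bracket_weitz_dhat : ⁅weitz k n, dhat k n⁆ = ee k n := by
  apply derivation_ext
  rintro ⟨m, hm⟩
  rw [Derivation.commutator_apply, weitz_X, dhat_X, ee_X]
  by_cases hmn : m = n
  · subst hmn
    rw [dif_pos rfl, map_zero]
    by_cases h0 : m = 0
    · subst h0; simp
    · rw [dif_neg h0, dhat_X]
      have hne : m - 1 ≠ m := by omega
      rw [dif_neg hne]
      have e2 : (⟨m - 1 + 1, by omega⟩ : Fin (m+1)) = ⟨m, hm⟩ := by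
        ext; simp; omega
      rw [e2, zero_sub, ← neg_smul]
      congr 1
      have c2 : m - (m - 1) = 1 := by omega
      have c3 : m - 1 + 1 = m := by omega
      rw [c2, c3, mul_one]
      ring
  · rw [dif_neg hmn, Derivation.map_smul, weitz_X]
    have h1 : m + 1 ≠ 0 := by omega
    rw [dif_neg h1]
    have e1 : (⟨m + 1 - 1, by omega⟩ : Fin (n+1)) = ⟨m, hm⟩ := by ext; simp
    rw [e1]
    by_cases h0 : m = 0
    · subst h0
      rw [dif_pos rfl, map_zero, sub_zero]
      congr 1
      have : n - 0 = n := by omega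
      push_cast [this]
      ring
    · rw [dif_neg h0, dhat_X]
      have hne : m - 1 ≠ n := by omega
      rw [dif_neg hne]
      have e2 : (⟨m - 1 + 1, by omega⟩ : Fin (n+1)) = ⟨m, hm⟩ := by
        ext; simp; omega
      rw [e2, ← sub_smul]
      congr 1
      have c1 : ((n - m : ℕ) : k) = (n : k) - m := by rw [Nat.cast_sub (by omega)]
      have c2 : n - (m - 1) = n - m + 1 := by omega
      have c3 : m - 1 + 1 = m := by omega
      rw [c2, c3]
      push_cast [c1]
      ring

lemma bracket_ee_dhat : ⁅ee k n, dhat k n⁆ = (-2 : k) • dhat k n := by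
  apply derivation_ext
  rintro ⟨m, hm⟩
  rw [Derivation.commutator_apply, Derivation.coe_smul, Pi.smul_apply, dhat_X, ee_X,
    Derivation.map_smul, dhat_X]
  by_cases hmn : m = n
  · rw [dif_pos hmn]; simp
  · rw [dif_neg hmn, Derivation.map_smul, ee_X, smul_smul, smul_smul, smul_smul, ← sub_smul]
    congr 1
    push_cast
    ring

section
variable {z : MvPolynomial (Fin (n + 1)) k} {w : ℕ}

lemma ee_dhat_iter (he : ee k n z = (w : k) • z) (j : ℕ) :
    ee k n ((⇑(dhat k n))^[j] z) = ((w : k) - 2 * j) • (⇑(dhat k n))^[j] z := by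
  induction j with
  | zero => simpa using he
  | succ m ih =>
    rw [Function.iterate_succ_apply']
    have h := DFunLike.congr_fun (bracket_ee_dhat (k := k) (n := n)) ((⇑(dhat k n))^[m] z)
    rw [Derivation.commutator_apply, Derivation.coe_smul, Pi.smul_apply,
      sub_eq_iff_eq_add] at h
    rw [h, ih, Derivation.map_smul, ← add_smul]
    congr 1
    push_cast
    ring

lemma weitz_dhat_iter (hd : weitz k n z = 0) (he : ee k n z = (w : k) • z) (j : ℕ) :
    weitz k n ((⇑(dhat k n))^[j + 1] z) =
      (((j : k) + 1) * ((w : k) - j)) • (⇑(dhat k n))^[j] z := by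
  induction j with
  | zero =>
    have h := DFunLike.congr_fun (bracket_weitz_dhat (k := k) (n := n)) z
    rw [Derivation.commutator_apply, sub_eq_iff_eq_add] at h
    simp only [Function.iterate_succ_apply', Function.iterate_zero_apply]
    rw [h, hd, map_zero, he, add_zero]
    norm_num
  | succ m ih =>
    have h := DFunLike.congr_fun (bracket_weitz_dhat (k := k) (n := n))
      ((⇑(dhat k n))^[m + 1] z)
    rw [Derivation.commutator_apply, sub_eq_iff_eq_add] at h
    rw [Function.iterate_succ_apply' (⇑(dhat k n)) (m + 1) z, h, ih, Derivation.map_smul,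
      ee_dhat_iter he,
      show (dhat k n) ((⇑(dhat k n))^[m] z) = (⇑(dhat k n))^[m+1] z from
        (Function.iterate_succ_apply' _ _ _).symm, ← add_smul]
    congr 1
    push_cast
    ring

lemma key_coeff (m : ℕ) (hmw : m < w) :
    ((-1 : k) ^ (m+1) * ((w - (m+1)).factorial : k) / (((m+1).factorial * w.factorial : ℕ) : k))
        * (((m : k) + 1) * ((w : k) - m))
      = -((-1 : k) ^ m * ((w - m).factorial : k) / ((m.factorial * w.factorial : ℕ) : k)) := by
  have h2 : ((w - m).factorial : k) = ((w : k) - m) * ((w - (m+1)).factorial : k) := by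
    have h1 : w - m = (w - (m+1)) + 1 := by omega
    rw [h1, Nat.factorial_succ]
    push_cast
    rw [Nat.cast_sub (by omega : m + 1 ≤ w)]
    push_cast
    ring
  have h3 : (m+1).factorial = (m+1) * m.factorial := Nat.factorial_succ m
  have d1 : ((m.factorial * w.factorial : ℕ) : k) ≠ 0 :=
    Nat.cast_ne_zero.mpr (by positivity)
  have d2 : (((m+1).factorial * w.factorial : ℕ) : k) ≠ 0 :=
    Nat.cast_ne_zero.mpr (by positivity)
  have hf : (m.factorial : k) ≠ 0 := Nat.cast_ne_zero.mpr m.factorial_pos.ne'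
  have hw' : (w.factorial : k) ≠ 0 := Nat.cast_ne_zero.mpr w.factorial_pos.ne'
  have hm1 : ((m : k) + 1) ≠ 0 := by
    have : (((m + 1 : ℕ)) : k) ≠ 0 := Nat.cast_ne_zero.mpr (Nat.succ_ne_zero m)
    push_cast at this
    exact this
  rw [h2, h3]
  push_cast
  field_simp
  ring

end

end Helpers

/-- The Casimir element `τ_i(z) = Σ_{k=0}^{i} (−1)^k ((w−k)!/(k!·w!)) x_{i−k} d̂^k(z)`
associated to a kernel element `z` of weight `w`, for `i ≤ n`. -/
noncomputable def tau (k : Type*) [Field k] [CharZero k] (n w i : ℕ) (hi : i ≤ n)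
    (z : MvPolynomial (Fin (n + 1)) k) : MvPolynomial (Fin (n + 1)) k :=
  ∑ j ∈ Finset.range (i + 1),
    ((-1 : k) ^ j * ((w - j).factorial : k) / ((j.factorial * w.factorial : ℕ) : k)) •
      (X (⟨i - j, by omega⟩ : Fin (n + 1)) * (⇑(dhat k n))^[j] z)

/-- For a nonzero kernel element `z` of weight `w ∈ ℕ` and
`0 ≤ i ≤ min(n, w)`, the Casimir element `τ_i(z)` again lies in the kernel of `d`. -/
theorem tau_mem_kernel (k : Type*) [Field k] [CharZero k] (n : ℕ)
    (z : MvPolynomial (Fin (n + 1)) k) (hz0 : z ≠ 0) (w : ℕ)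
    (hd : weitz k n z = 0) (he : ee k n z = (w : k) • z)
    (i : ℕ) (hin : i ≤ n) (hiw : i ≤ w) :
    weitz k n (tau k n w i hin z) = 0 := by
  classical
  rw [tau, map_sum]
  set F : ℕ → MvPolynomial (Fin (n + 1)) k := fun j =>
    if j < i then
      ((-1 : k) ^ j * ((w - j).factorial : k) / ((j.factorial * w.factorial : ℕ) : k)) •
        (X (⟨i - j - 1, by omega⟩ : Fin (n + 1)) * (⇑(dhat k n))^[j] z)
    else 0 with hF
  have hterm : ∀ j ∈ Finset.range (i + 1),
      weitz k n (((-1 : k) ^ j * ((w - j).factorial : k) /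
          ((j.factorial * w.factorial : ℕ) : k)) •
        (X (⟨i - j, by omega⟩ : Fin (n + 1)) * (⇑(dhat k n))^[j] z))
      = F j - (if j = 0 then 0 else F (j - 1)) := by
    intro j hj
    rw [Finset.mem_range] at hj
    rw [Derivation.map_smul, Derivation.leibniz]
    cases j with
    | zero =>
      rw [if_pos rfl, sub_zero]
      simp only [Function.iterate_zero_apply]
      rw [hd, smul_zero, zero_add, weitz_X]
      by_cases h0 : i - 0 = 0
      · rw [dif_pos h0, smul_zero, smul_zero]
        simp only [hF]
        rw [if_neg (by omega)]
      · rw [dif_neg h0]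
        simp only [hF]
        rw [if_pos (by omega)]
        rw [smul_eq_mul, mul_comm z]
        simp
    | succ m =>
      rw [weitz_dhat_iter hd he m, weitz_X, smul_add, if_neg (Nat.succ_ne_zero m)]
      have hmi : m < i := by omega
      have part1 : ((-1 : k) ^ (m+1) * ((w - (m+1)).factorial : k) /
            (((m+1).factorial * w.factorial : ℕ) : k)) •
          ((X (⟨i - (m+1), by omega⟩ : Fin (n + 1)) : MvPolynomial (Fin (n + 1)) k) •
            ((((m : k) + 1) * ((w : k) - m)) • (⇑(dhat k n))^[m] z))
          = -(F m) := by
        rw [smul_eq_mul, mul_smul_comm, smul_smul, key_coeff m (by omega), neg_smul]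
        simp only [hF]
        rw [if_pos hmi]
        rfl
      have part2 : ((-1 : k) ^ (m+1) * ((w - (m+1)).factorial : k) /
            (((m+1).factorial * w.factorial : ℕ) : k)) •
          ((⇑(dhat k n))^[m+1] z •
            (if _ : i - (m+1) = 0 then 0
              else X (⟨i - (m+1) - 1, by omega⟩ : Fin (n + 1))))
          = F (m+1) := by
        by_cases hip : i - (m+1) = 0
        · rw [dif_pos hip, smul_zero, smul_zero]
          simp only [hF]
          rw [if_neg (by omega)]
        · rw [dif_neg hip]
          simp only [hF]
          rw [if_pos (by omega), smul_eq_mul, mul_comm ((⇑(dhat k n))^[m+1] z)]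
      rw [part1, part2, Nat.add_sub_cancel]
      ring
  rw [Finset.sum_congr rfl hterm, Finset.sum_sub_distrib]
  have h1 : ∑ j ∈ Finset.range (i + 1), (if j = 0 then 0 else F (j - 1))
      = ∑ j ∈ Finset.range i, F j := by
    rw [Finset.sum_range_succ']
    simp
  have h2 : ∑ j ∈ Finset.range (i + 1), F j = ∑ j ∈ Finset.range i, F j := by
    rw [Finset.sum_range_succ]
    simp only [hF]
    rw [if_neg (by omega), add_zero]
  rw [h1, h2, sub_self]
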